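/- Let x_1, ..., x_d be real numbers (not necessarily nonnegative) with Σ x_i = 1 and Σ x_i^2 = p_2 where 1/d ≤ p_2 ≤ 1. Then Σ x_i^3 ≤ [1 − (d−1)y]³ + (d−1)y³, where y = (d − 1 − √((d−1)(p_2 d − 1)))/(d(d−1)). -/

import Mathlib

/-!
Let `a = 1 - (d - 1) y`, so that `(a, y, …, y)` has the prescribed first two power sums.
By Cauchy–Schwarz applied to the other coordinates (Samuelson's inequality), no coordinate
exceeds `a`. For `t ≤ a` we have `t³ ≤ q(t)`, where `q` is the quadratic with
`t³ - q(t) = (t - a)(t - y)²`; summing, `∑ q(xᵢ)` depends only on the first two power sums,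
hence equals its value at `(a, y, …, y)`, which is the claimed bound.
-/

open Finset

section PowerSums

variable {ι R : Type*} [Fintype ι] [CommRing R] [LinearOrder R] [IsStrictOrderedRing R]

theorem sq_card_mul_sub_sum_le (x : ι → R) (i : ι) :
    (Fintype.card ι * x i - ∑ j, x j) ^ 2 ≤
      (Fintype.card ι - 1) * (Fintype.card ι * ∑ j, x j ^ 2 - (∑ j, x j) ^ 2) := by
  classical
  have hcs := sq_sum_le_card_mul_sum_sq (s := univ.erase i) (f := x)
  rw [card_erase_of_mem (mem_univ i), card_univ, Nat.cast_pred (Fintype.card_pos_iff.2 ⟨i⟩),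
    sum_erase_eq_sub (mem_univ i), sum_erase_eq_sub (mem_univ i)] at hcs
  linear_combination (Fintype.card ι : R) * hcs

theorem sum_pow_three_le_of_le (x : ι → R) (a y : R) (hx : ∀ i, x i ≤ a)
    (h₁ : ∑ i, x i = a + (Fintype.card ι - 1) * y)
    (h₂ : ∑ i, x i ^ 2 = a ^ 2 + (Fintype.card ι - 1) * y ^ 2) :
    ∑ i, x i ^ 3 ≤ a ^ 3 + (Fintype.card ι - 1) * y ^ 3 := by
  have hq (i : ι) : x i ^ 3 ≤ (a + 2 * y) * x i ^ 2 - (2 * a * y + y ^ 2) * x i + a * y ^ 2 := by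
    linear_combination mul_nonneg (sub_nonneg.2 (hx i)) (sq_nonneg (x i - y))
  calc ∑ i, x i ^ 3
      ≤ ∑ i, ((a + 2 * y) * x i ^ 2 - (2 * a * y + y ^ 2) * x i + a * y ^ 2) :=
        sum_le_sum fun i _ => hq i
    _ = (a + 2 * y) * ∑ i, x i ^ 2 - (2 * a * y + y ^ 2) * ∑ i, x i
          + Fintype.card ι * (a * y ^ 2) := by
        rw [sum_add_distrib, sum_sub_distrib, ← mul_sum, ← mul_sum, sum_const, card_univ,
          nsmul_eq_mul]
    _ = a ^ 3 + (Fintype.card ι - 1) * y ^ 3 := by rw [h₁, h₂]; ring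

end PowerSums

theorem p3_upper_bound_real_general (d : ℕ) (hd : 2 ≤ d) (x : Fin d → ℝ)
    (h1 : ∑ i, x i = 1)
    (p₂ : ℝ) (h2 : ∑ i, (x i) ^ 2 = p₂) :
    let y : ℝ := ((d : ℝ) - 1 - Real.sqrt (((d : ℝ) - 1) * (p₂ * d - 1))) /
      ((d : ℝ) * ((d : ℝ) - 1))
    ∑ i, (x i) ^ 3 ≤ (1 - ((d : ℝ) - 1) * y) ^ 3 + ((d : ℝ) - 1) * y ^ 3 := by
  intro y
  have hd₁ : (1 : ℝ) < d := by exact_mod_cast hd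
  have hsamuelson (i : Fin d) : ((d : ℝ) * x i - 1) ^ 2 ≤ ((d : ℝ) - 1) * (p₂ * d - 1) := by
    simpa [h1, h2, mul_comm p₂] using sq_card_mul_sub_sum_le x i
  set S := Real.sqrt (((d : ℝ) - 1) * (p₂ * d - 1))
  have hS : S ^ 2 = ((d : ℝ) - 1) * (p₂ * d - 1) :=
    Real.sq_sqrt ((sq_nonneg _).trans (hsamuelson ⟨0, by omega⟩))
  have hy : y = ((d : ℝ) - 1 - S) / (d * (d - 1)) := rfl
  have hd₀ : (d : ℝ) - 1 ≠ 0 := by linarith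
  set a := 1 - ((d : ℝ) - 1) * y
  have hda : d * a = 1 + S := by
    simp only [a, hy]; field_simp; ring
  have hmax (i : Fin d) : x i ≤ a := by
    have := Real.le_sqrt_of_sq_le (hsamuelson i)
    exact le_of_mul_le_mul_left (by linarith) (by linarith : (0 : ℝ) < d)
  refine le_of_le_of_eq (sum_pow_three_le_of_le x a y hmax ?_ ?_) (by simp)
  · simp [h1, a]
  · simp only [h2, Fintype.card_fin, a, hy]
    field_simp
    linear_combination (-(d : ℝ)) * hS

theorem p3_upper_bound_real (d : ℕ) (hd : 2 ≤ d) (x : Fin d → ℝ)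
    (h1 : ∑ i, x i = 1)
    (p₂ : ℝ) (h2 : ∑ i, (x i) ^ 2 = p₂)
    (hp₂ : 1 / (d : ℝ) ≤ p₂ ∧ p₂ ≤ 1) :
    let y : ℝ := ((d : ℝ) - 1 - Real.sqrt (((d : ℝ) - 1) * (p₂ * d - 1))) /
      ((d : ℝ) * ((d : ℝ) - 1))
    ∑ i, (x i) ^ 3 ≤ (1 - ((d : ℝ) - 1) * y) ^ 3 + ((d : ℝ) - 1) * y ^ 3 :=
  p3_upper_bound_real_general d hd x h1 p₂ h2
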